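/- For all non-negative integers n, q, s, p with q ≥ 1, s ≥ 1, s + p < n, and every sequence x ∈ A_q^n with more than one run, the strict inequality |B_{0,s,p}(x)| > Σ_{i=0}^{p} C(n-s, i) (q-1)^i holds. -/

import Mathlib

/-- The subsequence of `x` indexed by the finite set `S` of size `m`,
entries taken in increasing index order. -/
def subseqOf {q n m : ℕ} (x : Fin n → Fin q) (S : Finset (Fin n)) (h : S.card = m) :
    Fin m → Fin q :=
  fun i => x ((S.orderIsoOfFin h i : Fin n))

/-- The insertion/deletion/substitution ball of `x ∈ A_q^n`: all sequences `z` of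
length `m` such that some subsequence of `x` of length `n - s` is within Hamming
distance `p` of some subsequence of `z` of the same length.  For the `t`-insertion
`s`-deletion `p`-substitution ball `B_{t,s,p}(x)`, take `m = n + t - s`. -/
def idsBall (q s p : ℕ) {n m : ℕ} (x : Fin n → Fin q) : Set (Fin m → Fin q) :=
  { z | ∃ (S1 : Finset (Fin n)) (S2 : Finset (Fin m))
      (h1 : S1.card = n - s) (h2 : S2.card = n - s),
      hammingDist (subseqOf x S1 h1) (subseqOf z S2 h2) ≤ p }

/-!
The Hamming ball of radius `p` around any subsequence `x ∘ f` of length `n - s` lies in the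
deletion ball, so it suffices to find a second subsequence `x ∘ g ≠ x ∘ f`: the Hamming ball
around it is not contained in the one around `x ∘ f` (as `p < n - s` and `q ≥ 2`). If `x` is
not constant, two consecutive contiguous windows of length `n - s` must differ, since otherwise
every symbol of `x` would equal its successor.
-/

open Finset

section HammingBall

variable {ι α : Type*} [Fintype ι] [DecidableEq ι] [Fintype α] [DecidableEq α]

lemma filter_diff_eq_piFinset (y : ι → α) (T : Finset ι) :
    ({z : ι → α | ({j | y j ≠ z j} : Finset ι) = T} : Finset (ι → α)) =
      Fintype.piFinset fun j => if j ∈ T then univ.erase (y j) else {y j} := by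
  ext z
  simp only [mem_filter, mem_univ, true_and, Fintype.mem_piFinset, Finset.ext_iff]
  refine forall_congr' fun j => ?_
  split_ifs with hj <;> simp [hj, eq_comm]

lemma card_filter_diff_eq (y : ι → α) (T : Finset ι) :
    #{z : ι → α | ({j | y j ≠ z j} : Finset ι) = T} = (Fintype.card α - 1) ^ #T := by
  rw [filter_diff_eq_piFinset, Fintype.card_piFinset]
  simp only [apply_ite Finset.card, card_erase_of_mem (mem_univ _), card_univ, card_singleton]
  rw [prod_ite_mem, univ_inter, prod_const]

lemma card_filter_hammingDist_eq (y : ι → α) (i : ℕ) :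
    #{z : ι → α | hammingDist y z = i} =
      (Fintype.card ι).choose i * (Fintype.card α - 1) ^ i := by
  rw [card_eq_sum_card_fiberwise (f := fun z => ({j | y j ≠ z j} : Finset ι))
    (t := powersetCard i univ) fun z hz => by simpa [mem_powersetCard, hammingDist] using hz]
  rw [← card_univ, ← card_powersetCard, card_eq_sum_ones, sum_mul, one_mul]
  refine sum_congr rfl fun T hT => ?_
  rw [mem_powersetCard] at hT
  rw [filter_filter, ← hT.2, ← card_filter_diff_eq y T]
  congr 1
  refine filter_congr fun z _ => ?_
  exact and_iff_right_of_imp fun h => by rw [hammingDist, h]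

theorem card_hammingBall (y : ι → α) (p : ℕ) :
    #{z : ι → α | hammingDist y z ≤ p} =
      ∑ i ∈ range (p + 1), (Fintype.card ι).choose i * (Fintype.card α - 1) ^ i := by
  rw [card_eq_sum_card_fiberwise (f := hammingDist y) (t := range (p + 1))
    fun z hz => by simpa [Nat.lt_succ_iff] using hz]
  refine sum_congr rfl fun i hi => ?_
  rw [filter_filter, ← card_filter_hammingDist_eq y i]
  congr 1
  refine filter_congr fun z _ => ?_
  rw [mem_range] at hi
  exact and_iff_right_of_imp fun h => by omega

end HammingBall

theorem exists_hammingDist_le_lt {ι α : Type*} [Fintype ι] [DecidableEq ι] [DecidableEq α]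
    [Nontrivial α] {p : ℕ} (hp : p < Fintype.card ι) {y y' : ι → α} (hne : y ≠ y') :
    ∃ z, hammingDist y' z ≤ p ∧ p < hammingDist y z := by
  obtain ⟨k, hk⟩ := Function.ne_iff.1 hne
  obtain ⟨U, hU, hUcard⟩ := exists_subset_card_eq (s := univ.erase k) (n := p)
    (by rw [card_erase_of_mem (mem_univ k), card_univ]; omega)
  choose other hother using fun a : α => exists_ne a
  refine ⟨fun j => if j ∈ U then other (y j) else y' j, ?_, ?_⟩
  · calc hammingDist y' _ ≤ #U := card_le_card fun j hj => by
          by_contra hjU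
          simp [hjU] at hj
      _ = p := hUcard
  · have hkU : k ∉ U := fun h => by simpa using hU h
    calc p < #(insert k U) := by rw [card_insert_of_notMem hkU, hUcard]; omega
      _ ≤ hammingDist y _ := card_le_card fun j hj => by
          rcases mem_insert.1 hj with rfl | hjU
          · simpa [hkU] using hk
          · simpa [hjU] using (hother (y j)).symm

def Fin.windowEmb {m n : ℕ} (a : ℕ) (h : m + a ≤ n) : Fin m ↪o Fin n :=
  (Fin.addNatOrderEmb a).trans (Fin.castLEOrderEmb h)

@[simp] lemma Fin.val_windowEmb {m n : ℕ} (a : ℕ) (h : m + a ≤ n) (j : Fin m) :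
    (Fin.windowEmb a h j : ℕ) = j + a := rfl

theorem exists_comp_windowEmb_ne {α : Type*} {n s : ℕ} (hs : 0 < s) (hsn : s < n)
    (x : Fin n → α) (hx : ∃ i j, x i ≠ x j) :
    ∃ (a : ℕ) (ha : n - s + (a + 1) ≤ n),
      x ∘ Fin.windowEmb a (by omega) ≠ x ∘ Fin.windowEmb (a + 1) ha := by
  by_contra! h
  have step : ∀ (t : ℕ) (ht : t + 1 < n), x ⟨t, by omega⟩ = x ⟨t + 1, ht⟩ := by
    intro t ht
    -- `t` and `t + 1` are the same entry of the windows at offsets `min t (s - 1)` and one more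
    have := congrFun (h (min t (s - 1)) (by omega)) ⟨t - min t (s - 1), by omega⟩
    rw [Function.comp_apply, Function.comp_apply] at this
    convert this using 2 <;> ext <;> simp only [Fin.val_windowEmb] <;> omega
  have const : ∀ (t : ℕ) (ht : t < n), x ⟨t, ht⟩ = x ⟨0, by omega⟩ := by
    intro t ht
    induction t with
    | zero => rfl
    | succ t ih => rw [← step t ht, ih]
  obtain ⟨i, j, hij⟩ := hx
  exact hij ((const i i.2).trans (const j j.2).symm)

theorem subseqOf_image_orderEmb {q n m : ℕ} (x : Fin n → Fin q) (f : Fin m ↪o Fin n)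
    (h : (univ.image f).card = m) : subseqOf x (univ.image f) h = x ∘ f := by
  funext i
  rw [subseqOf, coe_orderIsoOfFin_apply,
    ← orderEmbOfFin_unique' h (f := f) fun i => mem_image_of_mem f (mem_univ i)]
  rfl

theorem subseqOf_univ {q m : ℕ} (z : Fin m → Fin q) (h : (univ : Finset (Fin m)).card = m) :
    subseqOf z univ h = z := by
  funext i
  rw [subseqOf, coe_orderIsoOfFin_apply,
    ← orderEmbOfFin_unique' h (f := RelEmbedding.refl (· ≤ ·)) fun i => mem_univ i]
  rfl

theorem mem_idsBall_of_hammingDist_le {q s p n : ℕ} {x : Fin n → Fin q}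
    (f : Fin (n - s) ↪o Fin n) {z : Fin (n - s) → Fin q} (hz : hammingDist (x ∘ f) z ≤ p) :
    z ∈ idsBall q s p x := by
  have h1 : (univ.image f).card = n - s := by simp [card_image_of_injective _ f.injective]
  have h2 : (univ : Finset (Fin (n - s))).card = n - s := by simp
  exact ⟨_, _, h1, h2, by rwa [subseqOf_image_orderEmb, subseqOf_univ]⟩

theorem idsBall_del_strict_general (n q s p : ℕ) (hs : 1 ≤ s) (hsp : s + p < n)
    (x : Fin n → Fin q) (hx : ∃ i j, x i ≠ x j) :
    (idsBall q s p x : Set (Fin (n - s) → Fin q)).ncard >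
      ∑ i ∈ Finset.range (p + 1), (n - s).choose i * (q - 1) ^ i := by
  have : Nontrivial (Fin q) := let ⟨i, j, h⟩ := hx; ⟨x i, x j, h⟩
  obtain ⟨a, ha, hne⟩ := exists_comp_windowEmb_ne hs (by omega) x hx
  obtain ⟨z, hz_near, hz_far⟩ :=
    exists_hammingDist_le_lt (p := p) (by rw [Fintype.card_fin]; omega) hne
  set B : Finset (Fin (n - s) → Fin q) :=
    {w | hammingDist (x ∘ Fin.windowEmb a (by omega)) w ≤ p}
  have hzB : z ∉ B := by simpa [B] using hz_far
  have hB : ↑(insert z B) ⊆ (idsBall q s p x : Set (Fin (n - s) → Fin q)) := by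
    rw [coe_insert, Set.insert_subset_iff]
    exact ⟨mem_idsBall_of_hammingDist_le _ hz_near,
      fun w hw => mem_idsBall_of_hammingDist_le _ (mem_filter.1 hw).2⟩
  calc ∑ i ∈ range (p + 1), (n - s).choose i * (q - 1) ^ i
      = #B := by rw [card_hammingBall, Fintype.card_fin, Fintype.card_fin]
    _ < #(insert z B) := card_lt_card (ssubset_insert hzB)
    _ = (↑(insert z B) : Set _).ncard := (Set.ncard_coe_finset _).symm
    _ ≤ _ := Set.ncard_le_ncard hB

/-- strict inequality for `B_{0,s,p}(x)` when `x` has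
more than one run. -/
theorem idsBall_del_strict (n q s p : ℕ) (hq : 1 ≤ q) (hs : 1 ≤ s) (hsp : s + p < n)
    (x : Fin n → Fin q) (hx : ∃ i j, x i ≠ x j) :
    (idsBall q s p x : Set (Fin (n - s) → Fin q)).ncard >
      ∑ i ∈ Finset.range (p + 1), (n - s).choose i * (q - 1) ^ i :=
  idsBall_del_strict_general n q s p hs hsp x hx
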